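/- (Lemma 6.9, population computers for threshold predicates) Let φ = (a1x1+…+avxv ≥ c) be a threshold predicate with c ∈ ℕ and each a_i ∈ {2^j, −2^j : j ≥ 0}. For every integer d ≥ 1 with 2^{d−1} ≥ c and |a_i| ≤ 2^d for all i, there exists a bounded binary population computer P=(Q,δ,I,O,H) with set of states Q = {0} ∪ {2^i, −2^i : 0 ≤ i ≤ d} (hence 2d+3 states), input states I = {a1,…,av}, helper multiset H consisting of d agents in state 0, and output function satisfying O(S)=1 iff Σ_{q∈S} q ≥ c, such that P decides φ (for every x ∈ ℕ^v the input with x_i agents in state a_i has output 1 iff Σa_ix_i ≥ c); moreover every run of P from an initial configuration with n agents has length at most n. -/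

import Mathlib

open scoped ENNReal Classical

namespace PaperPP

/-- Population computers (Angluin-style generalization). -/
structure PopComputer (σ : Type) where
  Q : Finset σ
  δ : Finset (Multiset σ × Multiset σ)
  I : Finset σ
  O : Finset σ → Option Bool
  H : Multiset σ
  delta_mem : ∀ t ∈ δ, ∀ q ∈ t.1 + t.2, q ∈ Q
  delta_card : ∀ t ∈ δ, Multiset.card t.2 = Multiset.card t.1 ∧ 2 ≤ Multiset.card t.1
  delta_supp : ∀ t ∈ δ, ∃ a b : σ, ∀ q ∈ t.1, q = a ∨ q = b
  delta_fun : ∀ t ∈ δ, ∀ u ∈ δ, t.1 = u.1 → t.2 = u.2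
  I_sub : I ⊆ Q
  H_mem : ∀ q ∈ H, q ∈ Q ∧ q ∉ I

variable {σ : Type}

def Step (P : PopComputer σ) (C C' : Multiset σ) : Prop :=
  ∃ t ∈ P.δ, t.1 ≤ C ∧ C' = C - t.1 + t.2

def Reaches (P : PopComputer σ) : Multiset σ → Multiset σ → Prop :=
  Relation.ReflTransGen (Step P)

def Terminal (P : PopComputer σ) (C : Multiset σ) : Prop :=
  ∀ t ∈ P.δ, ¬ t.1 ≤ C

def IsInput (P : PopComputer σ) (C : Multiset σ) : Prop :=
  ∀ q ∈ C, q ∈ P.I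

def Initial (P : PopComputer σ) (CI C0 : Multiset σ) : Prop :=
  ∃ CH : Multiset σ, (∀ q ∈ CH, q ∈ P.H) ∧ P.H ≤ CH ∧ C0 = CI + CH

def ReachableConfig (P : PopComputer σ) (C : Multiset σ) : Prop :=
  ∃ CI C0, IsInput P CI ∧ Initial P CI C0 ∧ Reaches P C0 C

def IsRun (P : PopComputer σ) (f : ℕ → Multiset σ) : Prop :=
  ∀ i, Step P (f i) (f (i + 1)) ∨ (Terminal P (f i) ∧ f (i + 1) = f i)

def FairRun (P : PopComputer σ) (f : ℕ → Multiset σ) : Prop :=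
  IsRun P f ∧ ∀ C : Multiset σ, {i | Reaches P (f i) C}.Infinite → ∃ j, f j = C

def StabilizesTo [DecidableEq σ] (P : PopComputer σ) (f : ℕ → Multiset σ) (b : Bool) : Prop :=
  ∃ i, ∀ C, Reaches P (f i) C → P.O C.toFinset = some b

def HasOutput [DecidableEq σ] (P : PopComputer σ) (CI : Multiset σ) (b : Bool) : Prop :=
  ∀ C0 f, Initial P CI C0 → FairRun P f → f 0 = C0 → StabilizesTo P f b

def Decides [DecidableEq σ] (P : PopComputer σ) (φ : Multiset σ → Bool) : Prop :=
  ∀ CI, IsInput P CI → HasOutput P CI (φ CI)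

def Bounded (P : PopComputer σ) : Prop :=
  ¬ ∃ f : ℕ → Multiset σ,
      (∃ CI, IsInput P CI ∧ Initial P CI (f 0)) ∧ ∀ i, Step P (f i) (f (i + 1))

def Terminating (P : PopComputer σ) : Prop :=
  ∀ f : ℕ → Multiset σ, (∃ CI, IsInput P CI ∧ Initial P CI (f 0)) → FairRun P f →
    ∃ i, Terminal P (f i)

def Binary (P : PopComputer σ) : Prop := ∀ t ∈ P.δ, Multiset.card t.1 = 2

def ConsensusOutput [DecidableEq σ] (P : PopComputer σ) : Prop :=
  ∃ Q1 : Finset σ, Q1 ⊆ P.Q ∧ ∀ S : Finset σ, S ⊆ P.Q → S.Nonempty →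
    P.O S = if S ⊆ Q1 then some true else if S ⊆ P.Q \ Q1 then some false else none

def MarkedConsensusOutput [DecidableEq σ] (P : PopComputer σ) : Prop :=
  ∃ Q0 Q1 : Finset σ, Q0 ⊆ P.Q ∧ Q1 ⊆ P.Q ∧ Disjoint Q0 Q1 ∧
    ∀ S : Finset σ, S ⊆ P.Q → S.Nonempty →
      P.O S = if (S ∩ Q1).Nonempty ∧ S ∩ Q0 = ∅ then some true
        else if (S ∩ Q0).Nonempty ∧ S ∩ Q1 = ∅ then some false else none

def IsProtocol [DecidableEq σ] (P : PopComputer σ) : Prop :=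
  Binary P ∧ P.H = 0 ∧ ConsensusOutput P

/-! Boolean circuits, used to measure the size of output functions. -/

inductive Circ (α : Type) : Type where
  | inp : α → Circ α
  | tru : Circ α
  | fal : Circ α
  | neg : Circ α → Circ α
  | conj : Circ α → Circ α → Circ α
  | disj : Circ α → Circ α → Circ α

def Circ.eval {α : Type} (v : α → Bool) : Circ α → Bool
  | .inp a => v a
  | .tru => true
  | .fal => false
  | .neg c => !(Circ.eval v c)
  | .conj c d => Circ.eval v c && Circ.eval v d
  | .disj c d => Circ.eval v c || Circ.eval v d

def Circ.gates {α : Type} : Circ α → ℕ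
  | .inp _ => 1
  | .tru => 1
  | .fal => 1
  | .neg c => Circ.gates c + 1
  | .conj c d => Circ.gates c + Circ.gates d + 1
  | .disj c d => Circ.gates c + Circ.gates d + 1

noncomputable def outSize [DecidableEq σ] (P : PopComputer σ) : ℕ :=
  sInf {n | ∃ cd cv : Circ σ, Circ.gates cd + Circ.gates cv = n ∧
    ∀ S : Finset σ, S ⊆ P.Q →
      P.O S = if Circ.eval (fun q => decide (q ∈ S)) cd then
          some (Circ.eval (fun q => decide (q ∈ S)) cv) else none}

noncomputable def csize [DecidableEq σ] (P : PopComputer σ) : ℕ :=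
  P.Q.card + Multiset.card P.H + outSize P + ∑ t ∈ P.δ, Multiset.card t.1

noncomputable def asize [DecidableEq σ] (P : PopComputer σ) : ℕ :=
  P.Q.card + Multiset.card P.H + outSize P

/-! Probabilistic execution model. -/

def pairCount [DecidableEq σ] (C r : Multiset σ) : ℕ :=
  (Multiset.powersetCard 2 C).count r

noncomputable def stepKer [DecidableEq σ] (P : PopComputer σ) (C C' : Multiset σ) : ℝ≥0∞ :=
  (∑ t ∈ P.δ, if t.1 ≤ C ∧ C' = C - t.1 + t.2 then (pairCount C t.1 : ℝ≥0∞) else 0) /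
      (Nat.choose (Multiset.card C) 2 : ℝ≥0∞) +
    (if C' = C then
      1 - (∑ t ∈ P.δ, (pairCount C t.1 : ℝ≥0∞)) / (Nat.choose (Multiset.card C) 2 : ℝ≥0∞)
    else 0)

noncomputable def hitKer [DecidableEq σ] (P : PopComputer σ) (A : Set (Multiset σ))
    (C C' : Multiset σ) : ℝ≥0∞ :=
  if C ∈ A then (if C' = C then 1 else 0) else stepKer P C C'

noncomputable def hitIter [DecidableEq σ] (P : PopComputer σ) (A : Set (Multiset σ)) :
    ℕ → Multiset σ → Multiset σ → ℝ≥0∞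
  | 0, C, C' => if C' = C then 1 else 0
  | n + 1, C, C' => ∑' D : Multiset σ, hitIter P A n C D * hitKer P A D C'

/-- Expected hitting time of the set `A`, computed as `∑ₜ Pr[Xₜ ∉ A]` for the chain
absorbed at `A`. -/
noncomputable def expHit [DecidableEq σ] (P : PopComputer σ) (A : Set (Multiset σ))
    (C0 : Multiset σ) : ℝ≥0∞ :=
  ∑' n : ℕ, ∑' C : Multiset σ, if C ∈ A then 0 else hitIter P A n C0 C

def StableConfig [DecidableEq σ] (P : PopComputer σ) (C : Multiset σ) : Prop :=
  ∃ b : Bool, ∀ C', Reaches P C C' → P.O C'.toFinset = some b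

noncomputable def expTermination [DecidableEq σ] (P : PopComputer σ) (C0 : Multiset σ) : ℝ≥0∞ :=
  expHit P {C | Terminal P C} C0

noncomputable def expStabilization [DecidableEq σ] (P : PopComputer σ) (C0 : Multiset σ) : ℝ≥0∞ :=
  expHit P {C | StableConfig P C} C0

/-! Quantifier-free Presburger arithmetic. -/

inductive QFPA (v : ℕ) : Type where
  | threshold (a : Fin v → ℤ) (c : ℤ) : QFPA v
  | remainder (a : Fin v → ℤ) (θ : ℕ) (c : Fin θ) : QFPA v
  | not (φ : QFPA v) : QFPA v
  | and (φ ψ : QFPA v) : QFPA v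
  | or (φ ψ : QFPA v) : QFPA v

def QFPA.eval {v : ℕ} : QFPA v → (Fin v → ℕ) → Bool
  | .threshold a c, x => decide (c ≤ ∑ i, a i * (x i : ℤ))
  | .remainder a θ c, x => decide ((∑ i, a i * (x i : ℤ)) % (θ : ℤ) = ((c : ℕ) : ℤ))
  | .not φ, x => !(QFPA.eval φ x)
  | .and φ ψ, x => QFPA.eval φ x && QFPA.eval ψ x
  | .or φ ψ, x => QFPA.eval φ x || QFPA.eval ψ x

def zsize (z : ℤ) : ℕ := Nat.size z.natAbs + 1

def QFPA.fsize {v : ℕ} : QFPA v → ℕ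
  | .threshold a c => (∑ i, zsize (a i)) + zsize c + 1
  | .remainder a θ c => (∑ i, zsize (a i)) + Nat.size θ + Nat.size (c : ℕ) + 1
  | .not φ => QFPA.fsize φ + 1
  | .and φ ψ => QFPA.fsize φ + QFPA.fsize ψ + 1
  | .or φ ψ => QFPA.fsize φ + QFPA.fsize ψ + 1

def QFPA.double {v : ℕ} : QFPA v → QFPA (v + v)
  | .threshold a c =>
      .threshold (fun i => Fin.addCases (fun j => a j) (fun j => 2 * a j) i) c
  | .remainder a θ c =>
      .remainder (fun i => Fin.addCases (fun j => a j) (fun j => 2 * a j) i) θ c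
  | .not φ => .not (QFPA.double φ)
  | .and φ ψ => .and (QFPA.double φ) (QFPA.double ψ)
  | .or φ ψ => .or (QFPA.double φ) (QFPA.double ψ)

def inputConfig {v : ℕ} (lab : Fin v → σ) (x : Fin v → ℕ) : Multiset σ :=
  ∑ i : Fin v, Multiset.replicate (x i) (lab i)

def DecidesQFPA [DecidableEq σ] {v : ℕ} (P : PopComputer σ) (lab : Fin v → σ)
    (φ : QFPA v) : Prop :=
  Function.Injective lab ∧ P.I = Finset.univ.image lab ∧
    ∀ x : Fin v → ℕ, HasOutput P (inputConfig lab x) (QFPA.eval φ x)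

def DecidesQFPAFrom [DecidableEq σ] {v : ℕ} (P : PopComputer σ) (lab : Fin v → σ)
    (φ : QFPA v) (k : ℕ) : Prop :=
  Function.Injective lab ∧ P.I = Finset.univ.image lab ∧
    ∀ x : Fin v → ℕ, k ≤ ∑ i, x i → HasOutput P (inputConfig lab x) (QFPA.eval φ x)

/-! Potential functions and rapidness. -/

def mweight (w : σ → ℕ) (C : Multiset σ) : ℕ := (C.map w).sum

def IsPotential (P : PopComputer σ) (w : σ → ℕ) : Prop :=
  ∀ t ∈ P.δ, mweight w t.2 + (Multiset.card t.1 - 1) ≤ mweight w t.1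

def tmin [DecidableEq σ] (C r : Multiset σ) : ℕ :=
  if h : r.toFinset.Nonempty then r.toFinset.inf' h (fun q => C.count q) else 0

def speedOn [DecidableEq σ] (T : Finset (Multiset σ × Multiset σ)) (C : Multiset σ) : ℕ :=
  ∑ t ∈ T, (tmin C t.1) ^ 2

def speed [DecidableEq σ] (P : PopComputer σ) (C : Multiset σ) : ℕ := speedOn P.δ C

def RapidAt [DecidableEq σ] (P : PopComputer σ) (w : σ → ℕ) (α : ℝ) (C : Multiset σ) : Prop :=
  ∀ Cterm, Reaches P C Cterm → Terminal P Cterm →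
    ((mweight w C : ℝ) - (mweight w Cterm : ℝ)) ^ 2 / α ≤ (speed P C : ℝ)

def countIn [DecidableEq σ] (P : PopComputer σ) (C : Multiset σ) : ℕ :=
  ∑ q ∈ P.I, C.count q

def WellInitialised [DecidableEq σ] (P : PopComputer σ) (C : Multiset σ) : Prop :=
  ReachableConfig P C ∧ 3 * (countIn P C + Multiset.card P.H) ≤ 2 * Multiset.card C

def outdeg [DecidableEq σ] (P : PopComputer σ) (q : σ) : ℕ :=
  (P.δ.filter (fun t => q ∈ t.1)).card

def IsRapid [DecidableEq σ] (P : PopComputer σ) (α : ℝ) : Prop :=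
  (∃ w : σ → ℕ, IsPotential P w ∧ ∀ C, WellInitialised P C → RapidAt P w α C) ∧
  (∃ q0 : σ, ∀ q ∈ P.Q, q ≠ q0 → outdeg P q ≤ 2) ∧
  (∀ C : Multiset σ, IsInput P C → Terminal P C) ∧
  (∀ t ∈ P.δ, ∀ q ∈ P.I, t.1.count q ≤ 1 ∧ t.2.count q = 0)

def deltaGt [DecidableEq σ] (P : PopComputer σ) (w : σ → ℕ) :
    Finset (Multiset σ × Multiset σ) :=
  P.δ.filter (fun t => mweight w t.2 < mweight w t.1)

def deltaLt [DecidableEq σ] (P : PopComputer σ) (w : σ → ℕ) :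
    Finset (Multiset σ × Multiset σ) :=
  P.δ.filter (fun t => mweight w t.1 < mweight w t.2)

def RapidAtGt [DecidableEq σ] (P : PopComputer σ) (w : σ → ℕ) (α : ℝ) (C : Multiset σ) : Prop :=
  ∀ Cterm, Reaches P C Cterm → Terminal P Cterm →
    ((mweight w C : ℝ) - (mweight w Cterm : ℝ)) ^ 2 / α ≤ (speedOn (deltaGt P w) C : ℝ)

def GroupRapidAt [DecidableEq σ] (P : PopComputer σ) {e : ℕ} (w : Fin e → σ → ℕ) (α : ℝ)
    (C : Multiset σ) : Prop :=
  Terminal P C ∨ ∃ i : Fin e,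
    RapidAtGt P (w i) α C ∧
    (∃ t ∈ deltaGt P (w i), t.1 ≤ C) ∧
    (∀ C', Reaches P C C' → ∀ t ∈ deltaLt P (w i), ¬ t.1 ≤ C')

/-- Refinement between computers over the same state space. -/
def Refines [DecidableEq σ] (P' P : PopComputer σ) (π : Multiset σ → Multiset σ) : Prop :=
  (∀ C D, ReachableConfig P' C → ReachableConfig P' D → Step P' C D →
    Reaches P (π C) (π D)) ∧
  (P.I = P'.I ∧ ∀ CI C, IsInput P' CI → Initial P' CI C →
    ((∃ DI, IsInput P DI ∧ Initial P DI (π C)) ∧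
      ∀ q ∈ P.I, (π C).count q = C.count q)) ∧
  (∀ C, ReachableConfig P' C → Terminal P' C →
    Terminal P (π C) ∧ P.O (π C).toFinset = P'.O C.toFinset)

/-! Agents merge: two nonzero agents `x, y` whose sum `x + y` is again a state turn into
`x + y` and `0`. This preserves the sum of the population and lowers the number of nonzero
agents, so a run has at most as many steps as there are agents, and it ends in a configuration
where no merge is possible. There every `±2 ^ j` with `j < d` occurs at most once, and `2 ^ d`
cannot coexist with `-2 ^ d` or `-2 ^ (d - 1)`. So if `2 ^ d` is present, both the total and
the sum over the support are at least `2 ^ (d - 1) ≥ c`; symmetrically `-2 ^ d` makes both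
negative; otherwise every nonzero state occurs once and the two sums agree. In each case the
output, read off the support, is `c ≤ ∑ aᵢ xᵢ`. -/

section Runs

variable {P : PopComputer σ} {f : ℕ → Multiset σ}

lemma Reaches.eq_of_terminal {C C' : Multiset σ} (hT : Terminal P C) (h : Reaches P C C') :
    C' = C := by
  rcases Relation.ReflTransGen.cases_head h with rfl | ⟨D, ⟨t, ht, hle, -⟩, -⟩
  · rfl
  · exact absurd hle (hT t ht)

lemma IsRun.reaches (hf : IsRun P f) (i : ℕ) : Reaches P (f 0) (f i) := by
  induction i with
  | zero => exact .refl
  | succ i ih =>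
    rcases hf i with hstep | ⟨-, hfix⟩
    · exact ih.tail hstep
    · rwa [hfix]

lemma stabilizesTo_of_terminal [DecidableEq σ] {i : ℕ} {b : Bool} (hT : Terminal P (f i))
    (hO : P.O (f i).toFinset = some b) : StabilizesTo P f b :=
  ⟨i, fun _ h => (Reaches.eq_of_terminal hT h).symm ▸ hO⟩

variable {φ : Multiset σ → ℕ}

lemma add_le_of_steps (hφ : ∀ C C', Step P C C' → φ C' < φ C) {L : ℕ}
    (h : ∀ i < L, Step P (f i) (f (i + 1))) : φ (f L) + L ≤ φ (f 0) := by
  induction L with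
  | zero => simp
  | succ L ih =>
    have := hφ _ _ (h L L.lt_succ_self)
    have := ih fun i hi => h i (hi.trans L.lt_succ_self)
    omega

lemma IsRun.exists_terminal (hφ : ∀ C C', Step P C C' → φ C' < φ C) (hf : IsRun P f) :
    ∃ i, Terminal P (f i) := by
  by_contra! hT
  have := add_le_of_steps (f := f) hφ (L := φ (f 0) + 1) fun i _ =>
    (hf i).resolve_right fun h => hT i h.1
  omega

lemma bounded_of_potential (hφ : ∀ C C', Step P C C' → φ C' < φ C) : Bounded P := by
  rintro ⟨f, -, hf⟩
  have := add_le_of_steps (f := f) hφ (L := φ (f 0) + 1) fun i _ => hf i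
  omega

end Runs

lemma inputConfig_sum {v : ℕ} (a : Fin v → ℤ) (x : Fin v → ℕ) :
    (inputConfig a x).sum = ∑ i, a i * x i := by
  simp [inputConfig, Multiset.sum_sum, Multiset.sum_replicate, mul_comm]

lemma exists_eq_of_mem_inputConfig {v : ℕ} {lab : Fin v → σ} {x : Fin v → ℕ} {q : σ}
    (h : q ∈ inputConfig lab x) : ∃ i, q = lab i := by
  obtain ⟨i, -, hi⟩ := Multiset.mem_sum.1 h
  exact ⟨i, Multiset.eq_of_mem_replicate hi⟩

lemma sum_lt_two_pow_of_nodup {m : ℕ} {N : Multiset ℤ} (hN : N.Nodup)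
    (h : ∀ q ∈ N, ∃ k < m, q = 2 ^ k) : N.sum < 2 ^ m := by
  obtain ⟨K, hK, hKN⟩ : ∃ K ⊆ Finset.range m, K.image (fun k => (2 : ℤ) ^ k) = ⟨N, hN⟩ :=
    Finset.subset_image_iff.1 fun q hq => by
      obtain ⟨k, hk, rfl⟩ := h q hq
      exact Finset.mem_image_of_mem _ (Finset.mem_range.2 hk)
  have hsum : N.sum = ∑ k ∈ K, (2 : ℤ) ^ k := by
    have hinj : Set.InjOn (fun k => (2 : ℤ) ^ k) K := fun i _ j _ hij =>
      Int.pow_right_injective (by norm_num) hij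
    rw [← Finset.sum_image (f := fun q => q) hinj, hKN, Finset.sum_eq_multiset_sum,
      Multiset.map_id']
  rw [hsum]
  exact_mod_cast Nat.geomSum_lt le_rfl fun k hk => Finset.mem_range.1 (hK hk)

lemma sum_dedup_of_count_le_one {α : Type*} [DecidableEq α] [AddCommMonoid α] {C : Multiset α}
    (h : ∀ q, q ≠ 0 → C.count q ≤ 1) : C.dedup.sum = C.sum := by
  rw [Finset.sum_multiset_count C, ← Multiset.toFinset_val, ← Multiset.map_id (C.toFinset.val),
    ← Finset.sum_eq_multiset_sum]
  refine Finset.sum_congr rfl fun q hq => ?_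
  by_cases hq0 : q = 0
  · simp [hq0]
  · have := Multiset.one_le_count_iff_mem.2 (Multiset.mem_toFinset.1 hq)
    rw [show C.count q = 1 by have := h q hq0; omega, one_smul, id]

def mergeTransitions (Q : Finset ℤ) : Finset (Multiset ℤ × Multiset ℤ) :=
  ((Q ×ˢ Q).filter fun p => p.1 ≠ 0 ∧ p.2 ≠ 0 ∧ p.1 + p.2 ∈ Q).image
    fun p => ({p.1, p.2}, {p.1 + p.2, 0})

lemma mem_mergeTransitions {Q : Finset ℤ} {t : Multiset ℤ × Multiset ℤ} :
    t ∈ mergeTransitions Q ↔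
      ∃ x ∈ Q, ∃ y ∈ Q, x ≠ 0 ∧ y ≠ 0 ∧ x + y ∈ Q ∧ t = ({x, y}, {x + y, 0}) := by
  simp only [mergeTransitions, Finset.mem_image, Finset.mem_filter, Finset.mem_product,
    Prod.exists]
  aesop

def mergeComputer (Q : Finset ℤ) (h0 : 0 ∈ Q) (I : Finset ℤ) (hI : I ⊆ Q) (hI0 : 0 ∉ I)
    (m : ℕ) (O : Finset ℤ → Option Bool) : PopComputer ℤ where
  Q := Q
  δ := mergeTransitions Q
  I := I
  O := O
  H := Multiset.replicate m 0
  delta_mem t ht q hq := by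
    obtain ⟨x, hx, y, hy, -, -, hxy, rfl⟩ := mem_mergeTransitions.1 ht
    simp only [Multiset.insert_eq_cons, Multiset.cons_add, Multiset.mem_cons,
      Multiset.singleton_add, Multiset.mem_singleton] at hq
    rcases hq with rfl | rfl | rfl | rfl <;> assumption
  delta_card t ht := by
    obtain ⟨x, -, y, -, -, -, -, rfl⟩ := mem_mergeTransitions.1 ht
    simp
  delta_supp t ht := by
    obtain ⟨x, -, y, -, -, -, -, rfl⟩ := mem_mergeTransitions.1 ht
    exact ⟨x, y, by simp⟩
  delta_fun t ht u hu h := by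
    obtain ⟨x, -, y, -, -, -, -, rfl⟩ := mem_mergeTransitions.1 ht
    obtain ⟨x', -, y', -, -, -, -, rfl⟩ := mem_mergeTransitions.1 hu
    simpa using congrArg Multiset.sum h
  I_sub := hI
  H_mem q hq := Multiset.eq_of_mem_replicate hq ▸ ⟨h0, hI0⟩

def MergeFree (Q : Finset ℤ) (C : Multiset ℤ) : Prop :=
  ∀ x ∈ Q, ∀ y ∈ Q, x ≠ 0 → y ≠ 0 → x + y ∈ Q → ¬ ({x, y} : Multiset ℤ) ≤ C

section Merging

variable {Q : Finset ℤ} {P : PopComputer ℤ} {C C' : Multiset ℤ}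

lemma exists_merge_of_step (hP : P.δ = mergeTransitions Q) (h : Step P C C') :
    ∃ x y : ℤ, x ≠ 0 ∧ y ≠ 0 ∧ x + y ∈ Q ∧ C' + {x, y} = C + {x + y, 0} := by
  obtain ⟨t, ht, hle, rfl⟩ := h
  obtain ⟨x, -, y, -, hx, hy, hxy, rfl⟩ := mem_mergeTransitions.1 (hP ▸ ht)
  refine ⟨x, y, hx, hy, hxy, ?_⟩
  dsimp only at hle ⊢
  rw [add_right_comm]
  convert congrArg (· + ({x + y, 0} : Multiset ℤ)) (tsub_add_cancel_of_le hle)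

lemma sum_eq_of_step (hP : P.δ = mergeTransitions Q) (h : Step P C C') : C'.sum = C.sum := by
  obtain ⟨x, y, -, -, -, hC⟩ := exists_merge_of_step hP h
  have := congrArg Multiset.sum hC
  simp only [Multiset.sum_add, Multiset.insert_eq_cons, Multiset.sum_cons,
    Multiset.sum_singleton] at this
  linarith

lemma countP_ne_zero_lt_of_step (hP : P.δ = mergeTransitions Q) (h : Step P C C') :
    C'.countP (· ≠ 0) < C.countP (· ≠ 0) := by
  obtain ⟨x, y, hx, hy, -, hC⟩ := exists_merge_of_step hP h
  have := congrArg (Multiset.countP (· ≠ 0)) hC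
  simp only [Multiset.countP_add, Multiset.insert_eq_cons, ← Multiset.cons_zero,
    Multiset.countP_cons, Multiset.countP_zero] at this
  split_ifs at this <;> omega

lemma mem_of_step (hP : P.δ = mergeTransitions Q) (h0 : 0 ∈ Q) (h : Step P C C')
    (hC : ∀ q ∈ C, q ∈ Q) : ∀ q ∈ C', q ∈ Q := by
  obtain ⟨x, y, -, -, hxy, hC'⟩ := exists_merge_of_step hP h
  intro q hq
  have : q ∈ C + {x + y, 0} := hC' ▸ Multiset.mem_add.2 (.inl hq)
  simp only [Multiset.mem_add, Multiset.insert_eq_cons, Multiset.mem_cons,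
    Multiset.mem_singleton] at this
  rcases this with hq | rfl | rfl
  exacts [hC q hq, hxy, h0]

lemma sum_eq_of_reaches (hP : P.δ = mergeTransitions Q) (h : Reaches P C C') :
    C'.sum = C.sum := by
  induction h with
  | refl => rfl
  | tail _ hstep ih => rw [sum_eq_of_step hP hstep, ih]

lemma mem_of_reaches (hP : P.δ = mergeTransitions Q) (h0 : 0 ∈ Q) (h : Reaches P C C')
    (hC : ∀ q ∈ C, q ∈ Q) : ∀ q ∈ C', q ∈ Q := by
  induction h with
  | refl => exact hC
  | tail _ hstep ih => exact mem_of_step hP h0 hstep ih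

lemma mergeFree_of_terminal (hP : P.δ = mergeTransitions Q) (h : Terminal P C) :
    MergeFree Q C := fun x hx y hy hx0 hy0 hxy =>
  h _ (hP ▸ mem_mergeTransitions.2 ⟨x, hx, y, hy, hx0, hy0, hxy, rfl⟩)

lemma card_ge_of_steps (hP : P.δ = mergeTransitions Q) {f : ℕ → Multiset ℤ} {L : ℕ}
    (h : ∀ i < L, Step P (f i) (f (i + 1))) : L ≤ Multiset.card (f 0) :=
  calc L ≤ (f 0).countP (· ≠ 0) :=
        le_of_add_le_right (add_le_of_steps (fun _ _ => countP_ne_zero_lt_of_step hP) h)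
    _ ≤ Multiset.card (f 0) := Multiset.countP_le_card _ _

lemma binary_of_mergeTransitions (hP : P.δ = mergeTransitions Q) : Binary P := by
  intro t ht
  obtain ⟨x, -, y, -, -, -, -, rfl⟩ := mem_mergeTransitions.1 (hP ▸ ht)
  simp

end Merging

section MergeFree

variable {Q : Finset ℤ} {C D : Multiset ℤ}

lemma MergeFree.mono (h : MergeFree Q C) (hDC : D ≤ C) : MergeFree Q D :=
  fun x hx y hy hx0 hy0 hxy hle => h x hx y hy hx0 hy0 hxy (hle.trans hDC)

lemma MergeFree.map_neg (hQ : ∀ q ∈ Q, -q ∈ Q) (h : MergeFree Q C) :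
    MergeFree Q (C.map Neg.neg) := by
  intro x hx y hy hx0 hy0 hxy hle
  refine h (-x) (hQ x hx) (-y) (hQ y hy) (neg_ne_zero.2 hx0) (neg_ne_zero.2 hy0)
    (by simpa only [neg_add] using hQ _ hxy) ?_
  simpa [Multiset.map_map] using Multiset.map_le_map (f := Neg.neg) hle

lemma MergeFree.count_le_one (h : MergeFree Q C) {q : ℤ} (hq : q ∈ Q) (hq0 : q ≠ 0)
    (hqq : q + q ∈ Q) : C.count q ≤ 1 := by
  by_contra! h2
  exact h q hq q hq hq0 hq0 hqq (Multiset.le_count_iff_replicate_le.1 h2)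

lemma MergeFree.add_notMem (h : MergeFree Q C) {x y : ℤ} (hx : x ∈ C) (hy : y ∈ C)
    (hxy : x ≠ y) (hxQ : x ∈ Q) (hyQ : y ∈ Q) (hx0 : x ≠ 0) (hy0 : y ≠ 0) : x + y ∉ Q :=
  fun hs => h x hxQ y hyQ hx0 hy0 hs <|
    (Multiset.le_iff_subset (by simpa using hxy)).2 (by simpa using ⟨hx, hy⟩)

end MergeFree

def thresholdStates (d : ℕ) : Finset ℤ :=
  insert 0 ((((Finset.range (d + 1)).image fun j => (2 : ℤ) ^ j) ∪
    ((Finset.range (d + 1)).image fun j => -((2 : ℤ) ^ j))))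

lemma mem_thresholdStates {d : ℕ} {q : ℤ} :
    q ∈ thresholdStates d ↔ q = 0 ∨ ∃ j ≤ d, q = 2 ^ j ∨ q = -2 ^ j := by
  simp only [thresholdStates, Finset.mem_insert, Finset.mem_union, Finset.mem_image,
    Finset.mem_range, Nat.lt_succ_iff]
  aesop

lemma zero_mem_thresholdStates (d : ℕ) : (0 : ℤ) ∈ thresholdStates d :=
  mem_thresholdStates.2 (.inl rfl)

lemma two_pow_mem_thresholdStates {d j : ℕ} (h : j ≤ d) : (2 : ℤ) ^ j ∈ thresholdStates d :=
  mem_thresholdStates.2 (.inr ⟨j, h, .inl rfl⟩)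

lemma neg_two_pow_mem_thresholdStates {d j : ℕ} (h : j ≤ d) :
    -(2 : ℤ) ^ j ∈ thresholdStates d :=
  mem_thresholdStates.2 (.inr ⟨j, h, .inr rfl⟩)

lemma neg_mem_thresholdStates {d : ℕ} {q : ℤ} (h : q ∈ thresholdStates d) :
    -q ∈ thresholdStates d := by
  rcases mem_thresholdStates.1 h with rfl | ⟨j, hj, rfl | rfl⟩
  · simpa using h
  · exact neg_two_pow_mem_thresholdStates hj
  · simpa using two_pow_mem_thresholdStates hj

lemma mem_thresholdStates_of_abs_le {d j : ℕ} {q : ℤ} (hq : q = 2 ^ j ∨ q = -2 ^ j)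
    (hqd : |q| ≤ 2 ^ d) : q ∈ thresholdStates d := by
  have habs : |q| = 2 ^ j := by rcases hq with rfl | rfl <;> simp
  have hj : j ≤ d := (pow_le_pow_iff_right₀ one_lt_two).1 (habs ▸ hqd)
  rcases hq with rfl | rfl
  exacts [two_pow_mem_thresholdStates hj, neg_two_pow_mem_thresholdStates hj]

section Threshold

variable {d : ℕ} {C : Multiset ℤ}

lemma two_pow_add_self (k : ℕ) : (2 : ℤ) ^ k + 2 ^ k = 2 ^ (k + 1) := by ring

lemma MergeFree.le_sum_of_two_pow_mem (h : MergeFree (thresholdStates d) C)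
    (hC : ∀ q ∈ C, q ∈ thresholdStates d) (hmem : (2 : ℤ) ^ d ∈ C) {c : ℤ}
    (hc : c ≤ 2 ^ (d - 1)) : c ≤ C.sum := by
  set N := C.filter fun q => ¬ 0 ≤ q
  -- `2 ^ d` would merge with `-2 ^ d` and with `-2 ^ (d - 1)`
  have hN : ∀ q ∈ N, ∃ k < d - 1, q = -2 ^ k := by
    intro q hq
    obtain ⟨hqC, hq0⟩ := Multiset.mem_filter.1 hq
    obtain ⟨k, hk, rfl⟩ : ∃ k ≤ d, q = -2 ^ k := by
      rcases mem_thresholdStates.1 (hC q hqC) with rfl | ⟨k, hk, rfl | rfl⟩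
      · simp at hq0
      · exact absurd (by positivity) hq0
      · exact ⟨k, hk, rfl⟩
    have hne : (2 : ℤ) ^ d ≠ -2 ^ k :=
      ((neg_neg_of_pos (pow_pos two_pos k)).trans (pow_pos two_pos d)).ne'
    have hsum := h.add_notMem hmem hqC hne (two_pow_mem_thresholdStates le_rfl)
      (neg_two_pow_mem_thresholdStates hk) (by positivity) (by simp)
    refine ⟨k, ?_, rfl⟩
    by_contra! hkd
    obtain rfl | rfl : d = k ∨ d = k + 1 := by omega
    · exact hsum (by simpa using zero_mem_thresholdStates d)
    · exact hsum (by rw [pow_succ]; ring_nf; exact two_pow_mem_thresholdStates (by omega))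
  have hNodup : (N.map Neg.neg).Nodup := by
    refine (Multiset.nodup_iff_count_le_one.2 fun q => ?_).map neg_injective
    by_cases hq : q ∈ N
    · obtain ⟨k, hk, rfl⟩ := hN q hq
      refine (Multiset.count_le_of_le _ (Multiset.filter_le _ _)).trans
        (h.count_le_one (neg_two_pow_mem_thresholdStates (by omega)) (by simp) ?_)
      rw [← neg_add, two_pow_add_self]
      exact neg_two_pow_mem_thresholdStates (by omega)
    · simp [Multiset.count_eq_zero_of_notMem hq]
  have hNsum : -N.sum < 2 ^ (d - 1) := by
    rw [← Multiset.sum_map_neg']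
    refine sum_lt_two_pow_of_nodup hNodup fun q hq => ?_
    obtain ⟨p, hp, rfl⟩ := Multiset.mem_map.1 hq
    obtain ⟨k, hk, rfl⟩ := hN p hp
    exact ⟨k, hk, neg_neg _⟩
  have hpos : 2 ^ d ≤ (C.filter fun q => 0 ≤ q).sum :=
    Multiset.single_le_sum (fun q hq => (Multiset.mem_filter.1 hq).2) _
      (Multiset.mem_filter.2 ⟨hmem, by positivity⟩)
  have hsplit : (C.filter fun q => 0 ≤ q).sum + N.sum = C.sum := by
    rw [← Multiset.sum_add, Multiset.filter_add_not]
  have hpow : 2 * 2 ^ (d - 1) ≤ (2 : ℤ) ^ d + 1 := by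
    rcases d with _ | d
    · norm_num
    · simp only [Nat.add_sub_cancel, pow_succ]
      omega
  omega

lemma MergeFree.sum_neg_of_neg_two_pow_mem (h : MergeFree (thresholdStates d) C)
    (hC : ∀ q ∈ C, q ∈ thresholdStates d) (hmem : -(2 : ℤ) ^ d ∈ C) : C.sum < 0 := by
  have := (h.map_neg fun _ => neg_mem_thresholdStates).le_sum_of_two_pow_mem
    (by simpa using fun q hq => neg_mem_thresholdStates (hC q hq))
    (by simpa using Multiset.mem_map_of_mem Neg.neg hmem) (c := 1) (one_le_pow₀ one_le_two)
  rw [Multiset.sum_map_neg'] at this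
  omega

lemma MergeFree.count_le_one_of_notMem (h : MergeFree (thresholdStates d) C)
    (hC : ∀ q ∈ C, q ∈ thresholdStates d) (hp : (2 : ℤ) ^ d ∉ C) (hn : -(2 : ℤ) ^ d ∉ C)
    {q : ℤ} (hq0 : q ≠ 0) : C.count q ≤ 1 := by
  by_cases hq : q ∈ C
  · rcases mem_thresholdStates.1 (hC q hq) with rfl | ⟨j, hj, rfl | rfl⟩
    · exact absurd rfl hq0
    · have hjd : j < d := hj.lt_of_ne (by rintro rfl; exact hp hq)
      refine h.count_le_one (two_pow_mem_thresholdStates hj) (by positivity) ?_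
      rw [two_pow_add_self]
      exact two_pow_mem_thresholdStates hjd
    · have hjd : j < d := hj.lt_of_ne (by rintro rfl; exact hn hq)
      refine h.count_le_one (neg_two_pow_mem_thresholdStates hj) (by simp) ?_
      rw [← neg_add, two_pow_add_self]
      exact neg_two_pow_mem_thresholdStates hjd
  · simp [Multiset.count_eq_zero_of_notMem hq]

lemma MergeFree.le_sum_toFinset_iff (h : MergeFree (thresholdStates d) C)
    (hC : ∀ q ∈ C, q ∈ thresholdStates d) {c : ℤ} (hc0 : 0 ≤ c) (hc : c ≤ 2 ^ (d - 1)) :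
    c ≤ ∑ q ∈ C.toFinset, q ↔ c ≤ C.sum := by
  have hsupport : ∑ q ∈ C.toFinset, q = C.dedup.sum := by
    rw [Finset.sum_eq_multiset_sum, Multiset.toFinset_val, Multiset.map_id']
  have hdedupQ : ∀ q ∈ C.dedup, q ∈ thresholdStates d :=
    fun q hq => hC q (Multiset.mem_dedup.1 hq)
  have hfree := h.mono (Multiset.dedup_le C)
  rw [hsupport]
  by_cases hp : (2 : ℤ) ^ d ∈ C
  · exact iff_of_true (hfree.le_sum_of_two_pow_mem hdedupQ (Multiset.mem_dedup.2 hp) hc)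
      (h.le_sum_of_two_pow_mem hC hp hc)
  by_cases hn : -(2 : ℤ) ^ d ∈ C
  · have := hfree.sum_neg_of_neg_two_pow_mem hdedupQ (Multiset.mem_dedup.2 hn)
    have := h.sum_neg_of_neg_two_pow_mem hC hn
    exact iff_of_false (by omega) (by omega)
  rw [sum_dedup_of_count_le_one fun q => h.count_le_one_of_notMem hC hp hn]

end Threshold

lemma decides_threshold {d : ℕ} {c : ℤ} (hc0 : 0 ≤ c) (hc : c ≤ 2 ^ (d - 1)) (I : Finset ℤ)
    (hI : I ⊆ thresholdStates d) (hI0 : 0 ∉ I) (m : ℕ) :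
    Decides (mergeComputer (thresholdStates d) (zero_mem_thresholdStates d) I hI hI0 m
      fun S => some (decide (c ≤ ∑ q ∈ S, q))) fun CI => decide (c ≤ CI.sum) := by
  rintro CI hCI C0 f ⟨CH, hCH, -, rfl⟩ hf hf0
  have hCH0 : ∀ q ∈ CH, q = 0 := fun q hq => Multiset.eq_of_mem_replicate (hCH q hq)
  have hC0 : ∀ q ∈ CI + CH, q ∈ thresholdStates d := by
    intro q hq
    rcases Multiset.mem_add.1 hq with hq | hq
    · exact hI (hCI q hq)
    · exact hCH0 q hq ▸ zero_mem_thresholdStates d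
  obtain ⟨i, hT⟩ := hf.1.exists_terminal fun _ _ => countP_ne_zero_lt_of_step rfl
  have hreach := hf0 ▸ hf.1.reaches i
  refine stabilizesTo_of_terminal hT (congrArg some (decide_eq_decide.2 ?_))
  rw [(mergeFree_of_terminal rfl hT).le_sum_toFinset_iff
      (mem_of_reaches rfl (zero_mem_thresholdStates d) hreach hC0) hc0 hc,
    sum_eq_of_reaches rfl hreach, Multiset.sum_add, Multiset.sum_eq_zero hCH0, add_zero]

theorem stmt7_general (v : ℕ) (a : Fin v → ℤ) (c : ℕ)
    (ha : ∀ i, ∃ j : ℕ, a i = 2 ^ j ∨ a i = -(2 ^ j)) (d : ℕ)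
    (hcd : (c : ℤ) ≤ 2 ^ (d - 1)) (had : ∀ i, |a i| ≤ 2 ^ d) :
    ∃ P : PopComputer ℤ,
      P.Q = insert 0 ((((Finset.range (d + 1)).image fun j => (2 : ℤ) ^ j) ∪
              ((Finset.range (d + 1)).image fun j => -((2 : ℤ) ^ j)))) ∧
      P.I = Finset.univ.image a ∧
      P.H = Multiset.replicate d (0 : ℤ) ∧
      (∀ S : Finset ℤ, S ⊆ P.Q → P.O S = some (decide ((c : ℤ) ≤ ∑ q ∈ S, q))) ∧
      Binary P ∧ Bounded P ∧
      (∀ x : Fin v → ℕ,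
        HasOutput P (inputConfig a x) (decide ((c : ℤ) ≤ ∑ i, a i * (x i : ℤ)))) ∧
      (∀ C0 : Multiset ℤ, (∃ CI, IsInput P CI ∧ Initial P CI C0) →
        ∀ f : ℕ → Multiset ℤ, f 0 = C0 →
          ∀ L : ℕ, (∀ i < L, Step P (f i) (f (i + 1))) → L ≤ Multiset.card C0) := by
  have hI : Finset.univ.image a ⊆ thresholdStates d := Finset.image_subset_iff.2 fun i _ =>
    let ⟨_, hj⟩ := ha i; mem_thresholdStates_of_abs_le hj (had i)
  have hI0 : (0 : ℤ) ∉ Finset.univ.image a := by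
    simp only [Finset.mem_image, Finset.mem_univ, true_and, not_exists]
    intro i hi
    obtain ⟨j, hj | hj⟩ := ha i <;> simp [hj] at hi
  refine ⟨mergeComputer (thresholdStates d) (zero_mem_thresholdStates d) _ hI hI0 d
    fun S => some (decide ((c : ℤ) ≤ ∑ q ∈ S, q)), rfl, rfl, rfl, fun _ _ => rfl,
    binary_of_mergeTransitions rfl,
    bounded_of_potential fun _ _ => countP_ne_zero_lt_of_step rfl, fun x => ?_,
    fun C0 _ f hf0 L hL => hf0 ▸ card_ge_of_steps rfl hL⟩
  rw [← inputConfig_sum]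
  refine decides_threshold (Int.natCast_nonneg c) hcd _ hI hI0 d _ fun q hq => ?_
  obtain ⟨i, rfl⟩ := exists_eq_of_mem_inputConfig hq
  exact Finset.mem_image_of_mem a (Finset.mem_univ i)

/-- Lemma 6.9: population computers for threshold predicates. -/
theorem stmt7 (v : ℕ) (a : Fin v → ℤ) (c : ℕ)
    (ha : ∀ i, ∃ j : ℕ, a i = 2 ^ j ∨ a i = -(2 ^ j)) (d : ℕ) (hd : 1 ≤ d)
    (hcd : (c : ℤ) ≤ 2 ^ (d - 1)) (had : ∀ i, |a i| ≤ 2 ^ d) :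
    ∃ P : PopComputer ℤ,
      P.Q = insert 0 ((((Finset.range (d + 1)).image fun j => (2 : ℤ) ^ j) ∪
              ((Finset.range (d + 1)).image fun j => -((2 : ℤ) ^ j)))) ∧
      P.I = Finset.univ.image a ∧
      P.H = Multiset.replicate d (0 : ℤ) ∧
      (∀ S : Finset ℤ, S ⊆ P.Q → P.O S = some (decide ((c : ℤ) ≤ ∑ q ∈ S, q))) ∧
      Binary P ∧ Bounded P ∧
      (∀ x : Fin v → ℕ,
        HasOutput P (inputConfig a x) (decide ((c : ℤ) ≤ ∑ i, a i * (x i : ℤ)))) ∧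
      (∀ C0 : Multiset ℤ, (∃ CI, IsInput P CI ∧ Initial P CI C0) →
        ∀ f : ℕ → Multiset ℤ, f 0 = C0 →
          ∀ L : ℕ, (∀ i < L, Step P (f i) (f (i + 1))) → L ≤ Multiset.card C0) :=
  stmt7_general v a c ha d hcd had

end PaperPP
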